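/- Let φ : ℝ → ℝ be continuously differentiable on [a,b] with a < b. Then T_φ(a,b) = ((b-a)/12) ∫_0^1 (1-3t)[φ'(a·t/2 + b·(1-t/2)) - φ'(b·t/2 + a·(1-t/2))] dt. -/

import Mathlib

/-! With `g t = φ (a + (b - a) / 2 * t) + φ (b - (b - a) / 2 * t)`, the integrand on the right is
`-(2 / (b - a)) * (1 - 3 * t) * g' t`. Integrating by parts against `1 - 3 * t` produces the
boundary terms `φ a + φ b + 4 * φ ((a + b) / 2)`, and the two affine substitutions turn `∫ g` into
`2 / (b - a) * ∫ x in a..b, φ x`. -/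

open MeasureTheory Set

theorem integral_one_sub_three_mul_mul_deriv {g g' : ℝ → ℝ}
    (hg : ∀ t ∈ Icc (0 : ℝ) 1, HasDerivWithinAt g (g' t) (Icc 0 1) t)
    (hg' : IntervalIntegrable g' volume 0 1) :
    ∫ t in (0 : ℝ)..1, (1 - 3 * t) * g' t = 3 * (∫ t in (0 : ℝ)..1, g t) - 2 * g 1 - g 0 := by
  rw [← uIcc_of_le zero_le_one] at hg
  have hu : ∀ t ∈ uIcc (0 : ℝ) 1, HasDerivWithinAt (fun t ↦ 1 - 3 * t) (-3) (uIcc 0 1) t :=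
    fun t _ ↦ by simpa using ((hasDerivWithinAt_id t _).const_mul 3).const_sub 1
  rw [intervalIntegral.integral_mul_deriv_eq_deriv_mul_of_hasDerivWithinAt hu hg
    intervalIntegrable_const hg', intervalIntegral.integral_const_mul]
  norm_num
  ring

section Mirror

variable {a b : ℝ} {φ φ' : ℝ → ℝ}

theorem mapsTo_add_half_mul (hab : a ≤ b) :
    MapsTo (fun t ↦ a + (b - a) / 2 * t) (Icc 0 1) (Icc a b) :=
  fun _ ⟨h0, h1⟩ ↦ ⟨by nlinarith, by nlinarith⟩

theorem mapsTo_sub_half_mul (hab : a ≤ b) :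
    MapsTo (fun t ↦ b - (b - a) / 2 * t) (Icc 0 1) (Icc a b) :=
  fun _ ⟨h0, h1⟩ ↦ ⟨by nlinarith, by nlinarith⟩

theorem hasDerivWithinAt_mirror_sum
    (hφ : ∀ x ∈ Icc a b, HasDerivWithinAt φ (φ' x) (Icc a b) x) (hab : a ≤ b) {t : ℝ}
    (ht : t ∈ Icc (0 : ℝ) 1) :
    HasDerivWithinAt (fun t ↦ φ (a + (b - a) / 2 * t) + φ (b - (b - a) / 2 * t))
      ((b - a) / 2 * (φ' (a + (b - a) / 2 * t) - φ' (b - (b - a) / 2 * t))) (Icc 0 1) t := by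
  have hleft := mapsTo_add_half_mul hab
  have hright := mapsTo_sub_half_mul hab
  have dleft := (hφ _ (hleft ht)).comp t
    (((hasDerivWithinAt_id t _).const_mul ((b - a) / 2)).const_add a) hleft
  have dright := (hφ _ (hright ht)).comp t
    (((hasDerivWithinAt_id t _).const_mul ((b - a) / 2)).const_sub b) hright
  exact (dleft.add dright).congr_deriv (by simp only [mul_one, mul_neg]; ring)

theorem integral_mirror_sum (hφ : ContinuousOn φ (Icc a b)) (hab : a < b) :
    ∫ t in (0 : ℝ)..1, (φ (a + (b - a) / 2 * t) + φ (b - (b - a) / 2 * t)) =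
      2 / (b - a) * ∫ x in a..b, φ x := by
  have hh : (b - a) / 2 ≠ 0 := by linarith
  have hleft : IntervalIntegrable (fun t ↦ φ (a + (b - a) / 2 * t)) volume 0 1 :=
    (hφ.comp (by fun_prop) (mapsTo_add_half_mul hab.le)).intervalIntegrable_of_Icc zero_le_one
  have hright : IntervalIntegrable (fun t ↦ φ (b - (b - a) / 2 * t)) volume 0 1 :=
    (hφ.comp (by fun_prop) (mapsTo_sub_half_mul hab.le)).intervalIntegrable_of_Icc zero_le_one
  have hφ_int : IntervalIntegrable φ volume a b := hφ.intervalIntegrable_of_Icc hab.le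
  have hmid : b - (b - a) / 2 * 1 ∈ uIcc a b := by
    rw [uIcc_of_le hab.le]; constructor <;> linarith
  rw [intervalIntegral.integral_add hleft hright, intervalIntegral.integral_comp_add_mul φ hh,
    intervalIntegral.integral_comp_sub_mul φ hh,
    show a + (b - a) / 2 * 1 = b - (b - a) / 2 * 1 by ring,
    mul_zero, add_zero, sub_zero, smul_eq_mul, smul_eq_mul, ← mul_add,
    intervalIntegral.integral_add_adjacent_intervals
      (hφ_int.mono_set (uIcc_subset_uIcc left_mem_uIcc hmid))
      (hφ_int.mono_set (uIcc_subset_uIcc hmid right_mem_uIcc))]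
  field_simp

end Mirror

theorem simpson_stmt3 (a b : ℝ) (hab : a < b) (φ φ' : ℝ → ℝ)
    (hφ' : ∀ x ∈ Set.Icc a b, HasDerivWithinAt φ (φ' x) (Set.Icc a b) x)
    (hcont : ContinuousOn φ' (Set.Icc a b)) :
    (φ a + φ b) / 6 + 2 / 3 * φ ((a + b) / 2) - (1 / (b - a)) * ∫ t in a..b, φ t =
      ((b - a) / 12) *
        ∫ t in (0:ℝ)..1, (1 - 3 * t) *
          (φ' (a * (t / 2) + b * (1 - t / 2)) - φ' (b * (t / 2) + a * (1 - t / 2))) := by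
  have hba : b - a ≠ 0 := (sub_pos.2 hab).ne'
  have hφ : ContinuousOn φ (Icc a b) := fun x hx ↦ (hφ' x hx).continuousWithinAt
  have hderiv_int : IntervalIntegrable
      (fun t ↦ (b - a) / 2 * (φ' (a + (b - a) / 2 * t) - φ' (b - (b - a) / 2 * t))) volume 0 1 :=
    (continuousOn_const.mul ((hcont.comp (by fun_prop) (mapsTo_add_half_mul hab.le)).sub
      (hcont.comp (by fun_prop) (mapsTo_sub_half_mul hab.le)))).intervalIntegrable_of_Icc
      zero_le_one
  have hparts := integral_one_sub_three_mul_mul_deriv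
    (fun t ht ↦ hasDerivWithinAt_mirror_sum hφ' hab.le ht) hderiv_int
  rw [integral_mirror_sum hφ hab] at hparts
  have hrescale : ∫ t in (0:ℝ)..1, (1 - 3 * t) *
        (φ' (a * (t / 2) + b * (1 - t / 2)) - φ' (b * (t / 2) + a * (1 - t / 2))) =
      -(2 / (b - a)) * ∫ t in (0:ℝ)..1, (1 - 3 * t) *
        ((b - a) / 2 * (φ' (a + (b - a) / 2 * t) - φ' (b - (b - a) / 2 * t))) := by
    rw [← intervalIntegral.integral_const_mul]
    congr 1 with t
    rw [show a * (t / 2) + b * (1 - t / 2) = b - (b - a) / 2 * t by ring,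
      show b * (t / 2) + a * (1 - t / 2) = a + (b - a) / 2 * t by ring]
    field_simp [hba]
    ring
  rw [hrescale, hparts, show a + (b - a) / 2 * 1 = (a + b) / 2 by ring,
    show b - (b - a) / 2 * 1 = (a + b) / 2 by ring, mul_zero, add_zero, sub_zero]
  field_simp [hba]
  ring
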